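/- Let a₁, a₂, β* > 0 with a₂ ≤ 2β* + a₁. Define z(t) = 2(t + t²)/(a₁ + a₂t² + 2β*t) for t > 0. Then z is strictly increasing on the interval [1, 1+√2]. -/
import Mathlib


theorem stmt_1 (a1 a2 bs : ℝ) (ha1 : 0 < a1) (ha2 : 0 < a2) (hbs : 0 < bs)
    (h : a2 ≤ 2 * bs + a1) :
    StrictMonoOn (fun t : ℝ => 2 * (t + t ^ 2) / (a1 + a2 * t ^ 2 + 2 * bs * t))
      (Set.Icc 1 (1 + Real.sqrt 2)) := by
  intro x hx y hy hxy
  obtain ⟨hx1, hx2⟩ := hx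
  obtain ⟨hy1, hy2⟩ := hy
  have hs : Real.sqrt 2 ^ 2 = 2 := Real.sq_sqrt (by norm_num)
  have hsnn : 0 ≤ Real.sqrt 2 := Real.sqrt_nonneg 2
  have hs1 : 1 < Real.sqrt 2 := by nlinarith
  have hx0 : 0 < x := lt_of_lt_of_le one_pos hx1
  have hy0 : 0 < y := lt_of_lt_of_le one_pos hy1
  have hdx : 0 < a1 + a2 * x ^ 2 + 2 * bs * x := by positivity
  have hdy : 0 < a1 + a2 * y ^ 2 + 2 * bs * y := by positivity
  have hxs : x < 1 + Real.sqrt 2 := lt_of_lt_of_le hxy hy2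
  have key : 0 < 1 + x + y - x * y := by
    nlinarith [mul_nonneg (sub_nonneg.2 hx1) (sub_nonneg.2 hy2),
      mul_pos (sub_pos.2 hxs) (sub_pos.2 hs1)]
  simp only
  rw [div_lt_div_iff₀ hdx hdy]
  nlinarith [mul_pos (sub_pos.2 hxy) key,
    mul_nonneg (mul_nonneg (sub_nonneg.2 h) (mul_pos hx0 hy0).le) (sub_pos.2 hxy).le,
    mul_pos (mul_pos ha1 (sub_pos.2 hxy)) key]
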